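/- arXiv:2411.02351 — 4 statements merged into one kernel-verified Lean document; each statement's English description precedes it below -/
import Mathlib

section
/- The torsion subgroup of the elliptic curve y² + y = x³ over ℚ is isomorphic to ℤ/3ℤ. -/
/-! A rational point `(x, y)` satisfies `y (y + 1) = x³`. Writing `y = a / c` in lowest terms,
`a (a + c) / c²` is again in lowest terms, so `a (a + c)` and `c²` are integer cubes; as `a` and
`a + c` are coprime both are cubes, and `c` is the cube of `c / x.den`. Hence `y` and `y + 1` are
both rational cubes, and Fermat's Last Theorem for exponent 3 forces `y ∈ {0, -1}`, so `x = 0`.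
The curve thus has exactly the three rational points `O`, `(0, 0)` and `(0, -1) = -(0, 0)`. -/

theorem eq_zero_or_eq_neg_one_of_eq_cube_of_add_one_eq_cube {R : Type*} [CommRing R]
    [Nontrivial R] (hR : FermatLastTheoremWith R 3) {y s t : R} (hs : y = s ^ 3)
    (ht : y + 1 = t ^ 3) : y = 0 ∨ y = -1 := by
  by_contra! h
  refine hR s 1 t ?_ one_ne_zero ?_ (by rw [one_pow, ← hs, ht])
  · rintro rfl
    exact h.1 (by simpa using hs)
  · rintro rfl
    exact h.2 (eq_neg_of_add_eq_zero_left (by simpa using ht))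

namespace Rat

private theorem mul_add_one_eq_div (q : ℚ) :
    q * (q + 1) = ((q.num * (q.num + q.den) : ℤ) : ℚ) / ((q.den ^ 2 : ℤ) : ℚ) := by
  conv_lhs => rw [← num_div_den q]
  push_cast
  field_simp

private theorem natAbs_coprime_mul_add_one (q : ℚ) :
    (q.num * (q.num + q.den)).natAbs.Coprime ((q.den : ℤ) ^ 2).natAbs := by
  rw [← Int.isCoprime_iff_nat_coprime]
  have h := q.isCoprime_num_den
  exact (h.mul_left (by simpa using h.add_mul_right_left 1)).pow_right

theorem num_mul_add_one (q : ℚ) : (q * (q + 1)).num = q.num * (q.num + q.den) := by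
  rw [mul_add_one_eq_div, num_div_eq_of_coprime (by positivity) (natAbs_coprime_mul_add_one q)]

theorem den_mul_add_one (q : ℚ) : (q * (q + 1)).den = q.den ^ 2 := by
  have h := den_div_eq_of_coprime (by positivity) (natAbs_coprime_mul_add_one q)
  rw [← mul_add_one_eq_div] at h
  exact_mod_cast h

end Rat

theorem exists_eq_cube_of_mul_add_one_eq_cube {x y : ℚ} (h : y * (y + 1) = x ^ 3) :
    (∃ s, y = s ^ 3) ∧ ∃ t, y + 1 = t ^ 3 := by
  have hnum : y.num * (y.num + y.den) = x.num ^ 3 := by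
    rw [← Rat.num_mul_add_one, h, Rat.num_pow]
  have hden : y.den ^ 2 = x.den ^ 3 := by
    rw [← Rat.den_mul_add_one, h, Rat.den_pow]
  obtain ⟨⟨a, ha⟩, ⟨b, hb⟩⟩ := Int.eq_pow_of_mul_eq_pow_odd
    (by simpa using y.isCoprime_num_den.mul_add_left_right 1) (by decide) hnum
  have hcube : (y.den : ℚ) = (y.den / x.den : ℚ) ^ 3 := by
    have hden' : (y.den : ℚ) ^ 2 = (x.den : ℚ) ^ 3 := by exact_mod_cast hden
    rw [div_pow, ← hden']
    field_simp
  refine ⟨⟨a / (y.den / x.den), ?_⟩, ⟨b / (y.den / x.den), ?_⟩⟩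
  · rw [div_pow, ← hcube, ← Int.cast_pow, ← ha, Rat.num_div_den]
  · rw [div_pow, ← hcube, ← Int.cast_pow, ← hb]
    push_cast
    rw [add_div, Rat.num_div_den, div_self (by positivity)]

open WeierstrassCurve.Affine

abbrev X139 : WeierstrassCurve ℚ := ⟨0, 0, 1, 0, 0⟩

namespace X139

theorem equation_iff (x y : ℚ) : X139.toAffine.Equation x y ↔ y * (y + 1) = x ^ 3 := by
  rw [WeierstrassCurve.Affine.equation_iff]
  constructor <;> intro h <;> linear_combination h

theorem nonsingular_zero_zero : X139.toAffine.Nonsingular 0 0 := by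
  simp [nonsingular_iff]

def P : X139.toAffine.Point := .some 0 0 nonsingular_zero_zero

theorem P_ne_neg_P : P ≠ -P := by
  simp [P, negY]

theorem point_eq_zero_or_eq_P_or_eq_neg_P (R : X139.toAffine.Point) :
    R = 0 ∨ R = P ∨ R = -P := by
  rcases R with _ | @⟨x, y, h⟩
  · exact .inl rfl
  have hxy := (X139.equation_iff x y).mp h.1
  obtain ⟨⟨s, hs⟩, ⟨t, ht⟩⟩ := exists_eq_cube_of_mul_add_one_eq_cube hxy
  obtain rfl | rfl := eq_zero_or_eq_neg_one_of_eq_cube_of_add_one_eq_cube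
    (fermatLastTheoremFor_iff_rat.mp fermatLastTheoremThree) hs ht <;>
  obtain rfl : x = 0 := pow_eq_zero_iff three_ne_zero |>.mp (by simpa using hxy.symm)
  · exact .inr (.inl rfl)
  · simp [P, negY]

theorem card_point : Nat.card X139.toAffine.Point = 3 := by
  rw [← Set.ncard_univ, Set.ncard_eq_three]
  refine ⟨0, P, -P, (Point.some_ne_zero _).symm, (neg_ne_zero.mpr (Point.some_ne_zero _)).symm,
    P_ne_neg_P, ?_⟩
  ext R
  simpa using point_eq_zero_or_eq_P_or_eq_neg_P R

theorem mem_zmultiples_P (R : X139.toAffine.Point) : R ∈ AddSubgroup.zmultiples P := by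
  rcases point_eq_zero_or_eq_P_or_eq_neg_P R with rfl | rfl | rfl
  · exact zero_mem _
  · exact AddSubgroup.mem_zmultiples P
  · exact neg_mem (AddSubgroup.mem_zmultiples P)

end X139

/-- The torsion subgroup of the elliptic curve `y² + y = x³` over `ℚ`
(the modular curve `X₁(3,9)`) is isomorphic to `ℤ/3ℤ`. -/
theorem X1_3_9_torsion :
    Nonempty ((AddCommGroup.torsion
      (⟨0, 0, 1, 0, 0⟩ : WeierstrassCurve ℚ).toAffine.Point) ≃+ ZMod 3) := by
  have : Finite X139.toAffine.Point := Nat.finite_of_card_ne_zero (by simp [X139.card_point])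
  have htop : AddCommGroup.torsion X139.toAffine.Point = ⊤ :=
    AddCommGroup.torsion_eq_top_iff.mpr isAddTorsion_of_finite
  exact ⟨((AddEquiv.addSubgroupCongr htop).trans AddSubgroup.topEquiv).trans
    (zmodAddEquivOfGenerator X139.mem_zmultiples_P X139.card_point).symm⟩
end

section
/- The polynomial x⁴ - x³ - x² + x + 1 is irreducible over ℚ, and the number field ℚ[x]/(x⁴ - x³ - x² + x + 1) has discriminant 117. -/
/-!
Reducing modulo 2 turns `f = X⁴ - X³ - X² + X + 1` into the fifth cyclotomic polynomial, which is
irreducible over `𝔽₂` because `2` has order `4` modulo `5`; by Gauss's lemma `f` is irreducible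
over `ℚ`. If `a` is a root of `f` generating `K`, the power basis `1, a, a², a³` has discriminant
`N(f'(a)) = 117 = 3² · 13`. It consists of algebraic integers, so `117 = m² · d_K` for an integer
`m`, whence `d_K ∈ {117, 13}`, and Minkowski's bound `|d_K| ≥ (4/9)(3π/4)⁴ > 13` for quartic
fields rules out `13`.
-/

open Polynomial NumberField Module

theorem irreducible_cyclotomic_five_zmod_two : Irreducible (cyclotomic 5 (ZMod 2)) := by
  have : Fact (Nat.Prime 2) := ⟨Nat.prime_two⟩
  refine ZMod.irreducible_of_dvd_cyclotomic_of_natDegree (by decide) dvd_rfl ?_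
  rw [natDegree_cyclotomic, Nat.totient_prime (by norm_num)]
  exact (orderOf_eq_prime_pow (p := 2) (n := 1) (by decide) (by decide)).symm

theorem map_zmod_two_quartic_eq_cyclotomic_five :
    (X ^ 4 - X ^ 3 - X ^ 2 + X + 1 : ℤ[X]).map (Int.castRingHom (ZMod 2)) =
      cyclotomic 5 (ZMod 2) := by
  have : Fact (Nat.Prime 5) := ⟨by norm_num⟩
  simp only [cyclotomic_prime, Finset.sum_range_succ, Finset.sum_range_zero, Polynomial.map_add,
    Polynomial.map_sub, Polynomial.map_pow, Polynomial.map_X, Polynomial.map_one]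
  linear_combination (-(X ^ 3 + X ^ 2) : (ZMod 2)[X]) * CharTwo.two_eq_zero (R := (ZMod 2)[X])

theorem irreducible_quartic : Irreducible (X ^ 4 - X ^ 3 - X ^ 2 + X + 1 : ℚ[X]) := by
  have hmonic : (X ^ 4 - X ^ 3 - X ^ 2 + X + 1 : ℤ[X]).Monic := by monicity!
  have hZ : Irreducible (X ^ 4 - X ^ 3 - X ^ 2 + X + 1 : ℤ[X]) :=
    hmonic.irreducible_of_irreducible_map _ _
      (map_zmod_two_quartic_eq_cyclotomic_five ▸ irreducible_cyclotomic_five_zmod_two)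
  simpa using (IsPrimitive.Int.irreducible_iff_irreducible_map_cast hmonic.isPrimitive).mp hZ

theorem natDegree_quartic : (X ^ 4 - X ^ 3 - X ^ 2 + X + 1 : ℚ[X]).natDegree = 4 := by
  compute_degree!

theorem minpoly_eq_quartic {K : Type*} [Field K] [Algebra ℚ K] {a : K}
    (ha : aeval a (X ^ 4 - X ^ 3 - X ^ 2 + X + 1 : ℚ[X]) = 0) :
    minpoly ℚ a = X ^ 4 - X ^ 3 - X ^ 2 + X + 1 :=
  (minpoly.eq_of_irreducible_of_monic irreducible_quartic ha (by monicity!)).symm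

theorem Algebra.leftMulMatrix_eq_of_mul_eq {R S ι : Type*} [CommRing R] [Ring S] [Algebra R S]
    [Fintype ι] [DecidableEq ι] (b : Basis ι R S) {x : S} {M : Matrix ι ι R}
    (h : ∀ j, x * b j = ∑ i, M i j • b i) : Algebra.leftMulMatrix b x = M := by
  ext i j
  rw [Algebra.leftMulMatrix_eq_repr_mul, h, b.repr_sum_self]

theorem discr_powerBasis_ofAdjoinEqTop_quartic {K : Type*} [Field K] [NumberField K] {a : K}
    (hint : IsIntegral ℚ a) (ha : aeval a (X ^ 4 - X ^ 3 - X ^ 2 + X + 1 : ℚ[X]) = 0)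
    (hgen : Algebra.adjoin ℚ {a} = ⊤) :
    Algebra.discr ℚ (PowerBasis.ofAdjoinEqTop hint hgen).basis = 117 := by
  set pb := PowerBasis.ofAdjoinEqTop hint hgen
  have hmin := minpoly_eq_quartic ha
  have hdim : pb.dim = 4 := by rw [PowerBasis.ofAdjoinEqTop_dim, hmin, natDegree_quartic]
  let b := pb.basis.reindex (finCongr hdim)
  have hb : ∀ i, b i = a ^ (i : ℕ) := fun i => by
    rw [Basis.reindex_apply, pb.basis_eq_pow]
    rfl
  have ha4 : a ^ 4 = a ^ 3 + a ^ 2 - a - 1 := by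
    simp only [map_add, map_sub, map_pow, aeval_X, aeval_one] at ha
    linear_combination ha
  have hderiv : aeval a (derivative (X ^ 4 - X ^ 3 - X ^ 2 + X + 1 : ℚ[X])) =
      4 * a ^ 3 - 3 * a ^ 2 - 2 * a + 1 := by
    simp only [derivative_add, derivative_sub, derivative_X_pow, derivative_X, derivative_one]
    simp
  -- Column `j` holds the coordinates of `f'(a) · aʲ`, reduced by `a⁴ = a³ + a² - a - 1`.
  have hM : Algebra.leftMulMatrix b (4 * a ^ 3 - 3 * a ^ 2 - 2 * a + 1) =
      !![1, -4, -1, -3; -2, -3, -5, -4; -3, 2, -2, -2; 4, 1, 3, 1] := by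
    refine Algebra.leftMulMatrix_eq_of_mul_eq b fun j => ?_
    fin_cases j <;>
      simp only [Fin.sum_univ_four, hb, Algebra.smul_def, eq_ratCast, Matrix.of_apply,
        Matrix.cons_val', Matrix.cons_val, Matrix.cons_val_zero, Matrix.cons_val_one,
        Matrix.cons_val_fin_one, Fin.isValue, Fin.coe_ofNat_eq_mod, Nat.reduceMod, Fin.zero_eta,
        Fin.mk_one, Fin.reduceFinMk, Rat.cast_neg, Rat.cast_ofNat, Rat.cast_one, pow_zero, pow_one,
        mul_one, one_mul, neg_mul]
    · ring
    · linear_combination 4 * ha4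
    · linear_combination (4 * a + 1) * ha4
    · linear_combination (4 * a ^ 2 + a + 3) * ha4
  rw [Algebra.discr_powerBasis_eq_norm, pb.finrank, hdim, PowerBasis.ofAdjoinEqTop_gen, hmin,
    hderiv, Algebra.norm_eq_matrix_det b, hM]
  simp [Matrix.det_succ_row_zero, Fin.sum_univ_succ, Fin.succAbove, Matrix.submatrix]
  norm_num

theorem NumberField.exists_discr_eq_sq_mul_discr {K : Type*} [Field K] [NumberField K]
    {ι : Type*} [Fintype ι] [DecidableEq ι] (b : Basis ι ℚ K) (hb : ∀ i, IsIntegral ℤ (b i)) :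
    ∃ m : ℤ, Algebra.discr ℚ b = m ^ 2 * discr K := by
  let B := (integralBasis K).reindex ((integralBasis K).indexEquiv b)
  have hP : ∀ i j, IsIntegral ℤ (B.toMatrix b i j) := by
    intro i j
    obtain ⟨x, hx⟩ : ∃ x : 𝓞 K, algebraMap (𝓞 K) K x = b j := ⟨⟨b j, hb j⟩, rfl⟩
    rw [Basis.toMatrix_apply, Basis.repr_reindex_apply, ← hx, integralBasis_repr_apply]
    exact isIntegral_algebraMap
  obtain ⟨m, hm⟩ := IsIntegrallyClosed.isIntegral_iff.mp (IsIntegral.det hP)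
  refine ⟨m, ?_⟩
  rw [← B.toMatrix_map_vecMul b, Algebra.discr_of_matrix_vecMul, ← hm, coe_discr,
    Basis.coe_reindex, Algebra.discr_reindex, eq_intCast]

theorem NumberField.lt_abs_discr_of_finrank_eq_four {K : Type*} [Field K] [NumberField K]
    (h : finrank ℚ K = 4) : 13 < |discr K| := by
  have hbound := abs_discr_ge (K := K) (by omega)
  rw [h] at hbound
  have hπ : 3.14 < Real.pi := Real.pi_gt_d2
  have : (13 : ℝ) < |discr K| := by
    refine lt_of_lt_of_le ?_ hbound
    nlinarith [pow_lt_pow_left₀ hπ (by norm_num) four_ne_zero]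
  exact_mod_cast this

theorem eq_117_of_eq_sq_mul {m D : ℤ} (h : 117 = m ^ 2 * D) (hD : 13 < |D|) : D = 117 := by
  have hDpos : 0 < D := by nlinarith [sq_nonneg m]
  rw [abs_of_pos hDpos] at hD
  have hm : m ^ 2 ≤ 8 := by nlinarith
  obtain ⟨hm₁, hm₂⟩ : -3 ≤ m ∧ m ≤ 3 := ⟨by nlinarith, by nlinarith⟩
  interval_cases m <;> omega

/-- The polynomial `x⁴ - x³ - x² + x + 1` is irreducible over `ℚ`, and the quartic
number field `ℚ[x]/(x⁴ - x³ - x² + x + 1)` has discriminant `117`. -/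
theorem quartic_field_disc_117 :
    Irreducible (X ^ 4 - X ^ 3 - X ^ 2 + X + 1 : ℚ[X]) ∧
      ∀ (K : Type) [Field K] [NumberField K] (a : K),
        aeval a (X ^ 4 - X ^ 3 - X ^ 2 + X + 1 : ℚ[X]) = 0 →
        Algebra.adjoin ℚ {a} = ⊤ →
        NumberField.discr K = 117 := by
  refine ⟨irreducible_quartic, fun K _ _ a ha hgen => ?_⟩
  have haZ : IsIntegral ℤ a := by
    refine ⟨X ^ 4 - X ^ 3 - X ^ 2 + X + 1, by monicity!, ?_⟩
    rw [← aeval_def, ← aeval_map_algebraMap ℚ]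
    simpa using ha
  let pb := PowerBasis.ofAdjoinEqTop haZ.tower_top hgen
  obtain ⟨m, hm⟩ := exists_discr_eq_sq_mul_discr pb.basis fun i => by
    rw [pb.basis_eq_pow]
    exact haZ.pow _
  rw [discr_powerBasis_ofAdjoinEqTop_quartic _ ha] at hm
  have hrank : finrank ℚ K = 4 := by
    rw [pb.finrank, PowerBasis.ofAdjoinEqTop_dim, minpoly_eq_quartic ha, natDegree_quartic]
  exact eq_117_of_eq_sq_mul (by exact_mod_cast hm) (lt_abs_discr_of_finrank_eq_four hrank)
end

section
/- The polynomial x⁵ - x⁴ - 4x³ + 3x² + 3x - 1 is irreducible over ℚ, and if a is a root of this polynomial, then the point (-a³ + a² + 2a, -a⁴ + a³ + 2a²) lies on the elliptic curve y² - y = x³ - x² over ℚ(a). -/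
open Polynomial

private lemma two_eq_zero' : (1 + 1 : (ZMod 2)[X]) = 0 := by
  rw [← C_1, ← C_add]
  norm_num
  rfl

private lemma monic_natDegree_two {R : Type*} [Semiring R] {q : R[X]} (hq : q.Monic)
    (h : q.natDegree = 2) : q = X ^ 2 + C (q.coeff 1) * X + C (q.coeff 0) := by
  ext n
  have h2 : q.coeff 2 = 1 := by
    have := hq.coeff_natDegree
    rwa [h] at this
  rcases n with _ | _ | _ | n
  · simp
  · simp
  · simp [h2, coeff_X_pow]
  · have : q.coeff (n + 3) = 0 := coeff_eq_zero_of_natDegree_lt (by omega)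
    rw [this]
    simp [coeff_X_pow, coeff_C]

private lemma irr2 : Irreducible (X ^ 5 + X ^ 4 + X ^ 2 + X + 1 : (ZMod 2)[X]) := by
  set P2 : (ZMod 2)[X] := X ^ 5 + X ^ 4 + X ^ 2 + X + 1 with hP2
  have hm : P2.Monic := by unfold P2; monicity!
  have hdeg : P2.natDegree = 5 := by unfold P2; compute_degree!
  have hne1 : P2 ≠ 1 := by
    intro h
    rw [h] at hdeg
    simp at hdeg
  rw [hm.irreducible_iff_lt_natDegree_lt hne1, hdeg]
  intro q hq hmem
  rw [Finset.mem_Ioc] at hmem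
  obtain ⟨hlo, hhi⟩ := hmem
  have hall : ∀ c : ZMod 2, c = 0 ∨ c = 1 := by decide
  have key : ∀ h r : (ZMod 2)[X], P2 = q * h + r → r ≠ 0 → r.natDegree < q.natDegree →
      ¬ q ∣ P2 := by
    intro h r heq hr hd hdvd
    rw [heq] at hdvd
    have hqr : q ∣ r := (dvd_add_right ⟨h, rfl⟩).mp hdvd
    have := Polynomial.natDegree_le_of_dvd hqr hr
    omega
  norm_num at hhi
  interval_cases hn : q.natDegree
  · -- degree 1
    have hq1 : q = X + C (q.coeff 0) := hq.eq_X_add_C hn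
    rcases hall (q.coeff 0) with hc | hc <;> rw [hc] at hq1
    · exact key (X ^ 4 + X ^ 3 + X + 1) 1
        (by rw [hq1, C_0]; unfold P2; ring) one_ne_zero (by simp [hn])
    · exact key (X ^ 4 + X) 1
        (by rw [hq1, C_1]; unfold P2; ring) one_ne_zero (by simp [hn])
  · -- degree 2
    have hq1 : q = X ^ 2 + C (q.coeff 1) * X + C (q.coeff 0) := monic_natDegree_two hq hn
    have hXonedeg : (X + 1 : (ZMod 2)[X]).natDegree = 1 := by compute_degree!
    have hXone : (X + 1 : (ZMod 2)[X]) ≠ 0 := by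
      intro h0
      rw [h0] at hXonedeg
      simp at hXonedeg
    rcases hall (q.coeff 1) with hb | hb <;> rcases hall (q.coeff 0) with hc | hc <;>
      rw [hb, hc] at hq1
    · exact key (X ^ 3 + X ^ 2 + 1) (X + 1)
        (by rw [hq1, C_0]; unfold P2; ring) hXone (by rw [hXonedeg]; omega)
    · exact key (X ^ 3 + X ^ 2 + X) 1
        (by rw [hq1, C_0, C_1]; unfold P2
            linear_combination (-(X : (ZMod 2)[X]) ^ 3) * two_eq_zero')
        one_ne_zero (by simp [hn])
    · exact key (X ^ 3 + 1) 1
        (by rw [hq1, C_0, C_1]; unfold P2; ring) one_ne_zero (by simp [hn])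
    · exact key (X ^ 3 + X) 1
        (by rw [hq1, C_1]; unfold P2
            linear_combination (-(X : (ZMod 2)[X]) ^ 3) * two_eq_zero')
        one_ne_zero (by simp [hn])

private lemma irrZ : Irreducible (X ^ 5 - X ^ 4 - 4 * X ^ 3 + 3 * X ^ 2 + 3 * X - 1 : ℤ[X]) := by
  set PZ : ℤ[X] := X ^ 5 - X ^ 4 - 4 * X ^ 3 + 3 * X ^ 2 + 3 * X - 1 with hPZ
  have hm : PZ.Monic := by unfold PZ; monicity!
  apply hm.irreducible_of_irreducible_map (Int.castRingHom (ZMod 2))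
  have hmap : PZ.map (Int.castRingHom (ZMod 2)) =
      (X ^ 5 + X ^ 4 + X ^ 2 + X + 1 : (ZMod 2)[X]) := by
    unfold PZ
    simp only [Polynomial.map_sub, Polynomial.map_add, Polynomial.map_pow, Polynomial.map_mul,
      Polynomial.map_X, Polynomial.map_one, Polynomial.map_ofNat]
    linear_combination (-(X : (ZMod 2)[X]) ^ 4 - 2 * X ^ 3 + X ^ 2 + X - 1) * two_eq_zero'
  rw [hmap]
  exact irr2

/-- The polynomial `x⁵ - x⁴ - 4x³ + 3x² + 3x - 1` is irreducible over `ℚ`, and if `a`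
is a root, then `(-a³ + a² + 2a, -a⁴ + a³ + 2a²)` lies on the elliptic curve
`y² - y = x³ - x²` (the modular curve `X₁(11)`) over `ℚ(a)`. -/
theorem X1_11_quintic_point :
    Irreducible (X ^ 5 - X ^ 4 - 4 * X ^ 3 + 3 * X ^ 2 + 3 * X - 1 : ℚ[X]) ∧
      ∀ (K : Type) [Field K] [Algebra ℚ K] (a : K),
        aeval a (X ^ 5 - X ^ 4 - 4 * X ^ 3 + 3 * X ^ 2 + 3 * X - 1 : ℚ[X]) = 0 →
        (-a ^ 4 + a ^ 3 + 2 * a ^ 2) ^ 2 - (-a ^ 4 + a ^ 3 + 2 * a ^ 2) =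
          (-a ^ 3 + a ^ 2 + 2 * a) ^ 3 - (-a ^ 3 + a ^ 2 + 2 * a) ^ 2 := by
  constructor
  · have hm : (X ^ 5 - X ^ 4 - 4 * X ^ 3 + 3 * X ^ 2 + 3 * X - 1 : ℤ[X]).Monic := by monicity!
    have := (Polynomial.IsPrimitive.Int.irreducible_iff_irreducible_map_cast hm.isPrimitive).mp irrZ
    have hmap : (X ^ 5 - X ^ 4 - 4 * X ^ 3 + 3 * X ^ 2 + 3 * X - 1 : ℤ[X]).map
        (Int.castRingHom ℚ) = (X ^ 5 - X ^ 4 - 4 * X ^ 3 + 3 * X ^ 2 + 3 * X - 1 : ℚ[X]) := by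
      simp only [Polynomial.map_sub, Polynomial.map_add, Polynomial.map_pow, Polynomial.map_mul,
        Polynomial.map_X, Polynomial.map_one, Polynomial.map_ofNat]
    rwa [hmap] at this
  · intro K _ _ a ha
    simp only [map_sub, map_add, map_mul, map_pow, map_one, map_ofNat, aeval_X] at ha
    linear_combination (a ^ 4 - a ^ 3 - 2 * a ^ 2) * ha
end

section
/- The set of rational points on the elliptic curve y² = x³ - x consists exactly of the point at infinity and the three 2-torsion points (0,0), (1,0), (-1,0). -/
/-!
If `P = (x, y)` is a rational point with `y ≠ 0`, the doubling formula shows that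
`w = (x² + 1) / (2y)` satisfies `w⁴ - 1 = v²` with `v = (x⁴ - 6x² + 1) / (4y²)`.
By Fermat's right triangle theorem (`a⁴ - b⁴ = c²` has no integer solutions with `bc ≠ 0`)
we get `v = 0`, i.e. `(x² - 3)² = 8`, which is impossible over `ℚ`.

Fermat's theorem is proved by descent on `|a|` for coprime `a, b`, parametrising primitive
Pythagorean triples: for odd `b` the triple `(b², c, a²)` yields a smaller solution directly;
for even `b` it yields `a² = u⁴ + 4v⁴`, and the triple `(u², 2v², |a|)` yields a smaller
solution.
-/

theorem Int.exists_eq_sq_of_mul_eq_sq {a b c : ℤ} (hab : IsCoprime a b) (h : a * b = c ^ 2)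
    (ha : 0 ≤ a) : ∃ r, a = r ^ 2 := by
  obtain ⟨r, hr | hr⟩ := Int.sq_of_isCoprime hab h
  · exact ⟨r, hr⟩
  · exact ⟨0, by nlinarith [sq_nonneg r]⟩

structure Fermat42Sub (a b c : ℤ) : Prop where
  isCoprime : IsCoprime a b
  b_ne_zero : b ≠ 0
  c_ne_zero : c ≠ 0
  eq : a ^ 4 - b ^ 4 = c ^ 2

namespace Fermat42Sub

variable {a b c : ℤ}

theorem a_ne_zero (h : Fermat42Sub a b c) : a ≠ 0 := by
  obtain ⟨-, hb, hc, heq⟩ := h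
  rintro rfl
  nlinarith [pow_pos (sq_pos_of_ne_zero hb) 2, sq_pos_of_ne_zero hc]

theorem isCoprime_sq_left (h : Fermat42Sub a b c) : IsCoprime (b ^ 2) c := by
  have : IsCoprime (b ^ 4) (a ^ 4 - 1 * b ^ 4) :=
    IsCoprime.sub_mul_right_right_iff.mpr h.isCoprime.symm.pow
  rw [one_mul, h.eq, IsCoprime.pow_left_iff four_pos, IsCoprime.pow_right_iff two_pos] at this
  exact this.pow_left

theorem pythagoreanTriple (h : Fermat42Sub a b c) : PythagoreanTriple (b ^ 2) c (a ^ 2) := by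
  unfold PythagoreanTriple
  linear_combination -h.eq

theorem exists_natAbs_lt_of_odd (h : Fermat42Sub a b c) (hb : Odd b) :
    ∃ a' b' c', Fermat42Sub a' b' c' ∧ a'.natAbs < a.natAbs := by
  obtain ⟨m, n, hb2, hc, ha2, hmn, -, -⟩ := h.pythagoreanTriple.coprime_classification'
    (Int.isCoprime_iff_gcd_eq_one.mp h.isCoprime_sq_left) (Int.odd_iff.mp hb.pow)
    (sq_pos_of_ne_zero h.a_ne_zero)
  have hn : n ≠ 0 := by rintro rfl; exact h.c_ne_zero (by simpa using hc)
  refine ⟨m, n, a * b, ⟨Int.isCoprime_iff_gcd_eq_one.mpr hmn, hn, mul_ne_zero h.a_ne_zero h.b_ne_zero,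
    by linear_combination -a ^ 2 * hb2 - (m ^ 2 - n ^ 2) * ha2⟩, ?_⟩
  rw [Int.natAbs_lt_iff_sq_lt]
  nlinarith [sq_pos_of_ne_zero hn]

theorem exists_of_sq_eq_pow_four_add_four_mul {a u v : ℤ} (huv : IsCoprime (u ^ 2) (2 * v ^ 2))
    (hv : v ≠ 0) (h : a ^ 2 = u ^ 4 + 4 * v ^ 4) :
    ∃ r s, Fermat42Sub r s u ∧ r.natAbs < a.natAbs := by
  have hu : Odd (u ^ 2) := Int.isCoprime_two_right.mp huv.of_mul_right_left
  have ha : 0 < |a| := abs_pos.mpr <| by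
    rintro rfl
    nlinarith [pow_pos (sq_pos_of_ne_zero hv) 2, sq_nonneg (u ^ 2)]
  have hpyth : PythagoreanTriple (u ^ 2) (2 * v ^ 2) |a| := by
    unfold PythagoreanTriple
    linear_combination -h - abs_mul_abs_self a
  obtain ⟨P, Q, hu2, hv2, haPQ, hPQ, -, hP⟩ := hpyth.coprime_classification'
    (Int.isCoprime_iff_gcd_eq_one.mp huv) (Int.odd_iff.mp hu) ha
  have hPQ' : P * Q = v ^ 2 := by linarith
  have hQ : 0 < Q := pos_of_mul_pos_right (hPQ' ▸ sq_pos_of_ne_zero hv) hP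
  have hcop : IsCoprime P Q := Int.isCoprime_iff_gcd_eq_one.mpr hPQ
  obtain ⟨r, rfl⟩ := Int.exists_eq_sq_of_mul_eq_sq hcop hPQ' hP
  obtain ⟨s, rfl⟩ :=
    Int.exists_eq_sq_of_mul_eq_sq (c := v) hcop.symm (by linear_combination hPQ') hQ.le
  refine ⟨r, s, ⟨?_, ?_, ?_, by linear_combination -hu2⟩, ?_⟩
  · exact (IsCoprime.pow_left_iff two_pos).mp ((IsCoprime.pow_right_iff two_pos).mp hcop)
  · rintro rfl
    simp at hQ
  · rintro rfl
    simp at hu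
  · rw [Int.natAbs_lt_iff_sq_lt, ← sq_abs a, haPQ]
    calc r ^ 2 < (r ^ 2) ^ 2 + (s ^ 2) ^ 2 := by nlinarith [Int.le_self_sq (r ^ 2)]
      _ ≤ ((r ^ 2) ^ 2 + (s ^ 2) ^ 2) ^ 2 := Int.le_self_sq _

theorem exists_sq_eq_pow_four_add_four_mul {m n a β : ℤ} (hmn : IsCoprime m n) (hm : 0 ≤ m)
    (hβ : β ≠ 0) (hprod : m * n = 2 * β ^ 2) (ha : a ^ 2 = m ^ 2 + n ^ 2) :
    ∃ u v, IsCoprime (u ^ 2) (2 * v ^ 2) ∧ v ≠ 0 ∧ a ^ 2 = u ^ 4 + 4 * v ^ 4 := by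
  have hmn_pos : 0 < m * n := hprod ▸ by positivity
  have hn : 0 ≤ n := (pos_of_mul_pos_right hmn_pos hm).le
  wlog hn2 : Even n generalizing m n
  · have hm2 : Even m :=
      (Int.even_mul.mp (hprod ▸ even_two_mul (β ^ 2))).resolve_right hn2
    exact this hmn.symm hn (by linear_combination hprod) (by linear_combination ha)
      (by linarith) hm hm2
  obtain ⟨ν, rfl⟩ := hn2
  rw [← two_mul] at hmn
  have hprod' : m * ν = β ^ 2 := by linarith
  obtain ⟨u, rfl⟩ := Int.exists_eq_sq_of_mul_eq_sq hmn.of_mul_right_right hprod' hm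
  obtain ⟨v, rfl⟩ := Int.exists_eq_sq_of_mul_eq_sq (c := β) hmn.of_mul_right_right.symm
    (by linear_combination hprod') (by linarith)
  refine ⟨u, v, hmn, ?_, by rw [ha]; ring⟩
  rintro rfl
  simp at hmn_pos

theorem exists_natAbs_lt_of_even (h : Fermat42Sub a b c) (hb : Even b) :
    ∃ a' b' c', Fermat42Sub a' b' c' ∧ a'.natAbs < a.natAbs := by
  have hcb := h.isCoprime_sq_left.symm
  have hc : Odd c := Int.isCoprime_two_right.mp
    (hcb.of_isCoprime_of_dvd_right (dvd_pow (even_iff_two_dvd.mp hb) two_ne_zero))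
  obtain ⟨m, n, -, hb2, ha2, hmn, -, hm⟩ := h.pythagoreanTriple.symm.coprime_classification'
    (Int.isCoprime_iff_gcd_eq_one.mp hcb) (Int.odd_iff.mp hc) (sq_pos_of_ne_zero h.a_ne_zero)
  obtain ⟨β, rfl⟩ := hb
  obtain ⟨u, v, huv, hv, hauv⟩ := exists_sq_eq_pow_four_add_four_mul (β := β)
    (Int.isCoprime_iff_gcd_eq_one.mpr hmn) hm (by rintro rfl; exact h.b_ne_zero (add_zero 0))
    (by linarith) ha2
  obtain ⟨r, s, hrs, hlt⟩ := exists_of_sq_eq_pow_four_add_four_mul huv hv hauv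
  exact ⟨r, s, u, hrs, hlt⟩

theorem exists_natAbs_lt (h : Fermat42Sub a b c) :
    ∃ a' b' c', Fermat42Sub a' b' c' ∧ a'.natAbs < a.natAbs :=
  (Int.even_or_odd b).elim h.exists_natAbs_lt_of_even h.exists_natAbs_lt_of_odd

end Fermat42Sub

theorem not_fermat42Sub (a b c : ℤ) : ¬Fermat42Sub a b c := by
  intro h
  obtain ⟨a', b', c', h', hlt⟩ := h.exists_natAbs_lt
  exact not_fermat42Sub a' b' c' h'
termination_by a.natAbs

theorem Rat.eq_zero_of_sq_eq_pow_four_sub_one {v w : ℚ} (h : v ^ 2 = w ^ 4 - 1) : v = 0 := by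
  by_contra hv
  set C := v * (w.den : ℚ) ^ 2
  have hC : C ^ 2 = ((w.num ^ 4 - (w.den : ℤ) ^ 4 : ℤ) : ℚ) := by
    push_cast
    rw [← Rat.mul_den_eq_num]
    linear_combination (w.den : ℚ) ^ 4 * h
  have hden : C.den = 1 := by
    have := congrArg Rat.den hC
    rw [Rat.den_pow, Rat.den_intCast] at this
    simpa using this
  refine not_fermat42Sub w.num w.den C.num ⟨?_, by positivity, ?_, ?_⟩
  · exact Int.isCoprime_iff_gcd_eq_one.mpr w.reduced
  · exact Rat.num_ne_zero.mpr (mul_ne_zero hv (by positivity))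
  · rw [← Rat.coe_int_num_of_den_eq_one hden] at hC
    exact_mod_cast hC.symm

/-- The rational points on the elliptic curve `y² = x³ - x` (the modular curve
`X₁(4,8)`) consist exactly of the point at infinity and the three `2`-torsion points
`(0,0)`, `(1,0)`, `(-1,0)`. -/
theorem X1_4_8_rational_points :
    ∀ x y : ℚ, y ^ 2 = x ^ 3 - x ↔
      (x, y) = (0, 0) ∨ (x, y) = (1, 0) ∨ (x, y) = (-1, 0) := by
  intro x y
  constructor
  · intro h
    obtain rfl : y = 0 := by
      by_contra hy
      -- `w = (x² + 1) / (2y)` is a square root of `x(2P)`, and `x(2P) ∓ 1` are squares as well.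
      have hw : ((x ^ 4 - 6 * x ^ 2 + 1) / (4 * y ^ 2)) ^ 2 = ((x ^ 2 + 1) / (2 * y)) ^ 4 - 1 := by
        field_simp
        linear_combination 256 * (y ^ 2 + x ^ 3 - x) * h
      have h8 : ¬IsSquare (8 : ℚ) := by norm_num [Rat.isSquare_iff]
      have hv := Rat.eq_zero_of_sq_eq_pow_four_sub_one hw
      rw [div_eq_zero_iff, or_iff_left (by positivity)] at hv
      exact h8 ⟨x ^ 2 - 3, by linear_combination -hv⟩
    have hx : x * (x - 1) * (x + 1) = 0 := by linear_combination -h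
    simp only [mul_eq_zero, sub_eq_zero, add_eq_zero_iff_eq_neg] at hx
    rcases hx with (rfl | rfl) | rfl <;> simp
  · rintro (h | h | h) <;> obtain ⟨rfl, rfl⟩ := Prod.mk.inj h <;> norm_num
end
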